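/- Let T be a theory over Σ and T^r a theory over Σ^r such that: (i) for every individual constant c of Σ, T^r ⊢ Rel(c); (ii) for every axiom A ∈ T, T^r ⊢ A^r; (iii) for every sort σ of Σ there is a closed individual of sort σ. Then for every closed formula A over Σ (with all right-hand contexts of sequents restricted to negative formulas), T ⊢ A implies T^r ⊢ A^r. -/

import Mathlib

/-! Multisorted classical first-order logic, deep embedding. -/

/-- Sorts: simple types over base sorts. -/
inductive FSort (B : Type) : Type
  | base : B → FSort B
  | arrow : FSort B → FSort B → FSort B

/-- A multisorted first-order signature. -/
structure Signature : Type 1 where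
  Base : Type
  Cst : Type
  cstSort : Cst → FSort Base
  Pred : Type
  arity : Pred → List (FSort Base)
  isNeg : Pred → Prop

/-- Type-valued membership of an element in a list (de Bruijn pointers into a context). -/
inductive Idx {α : Type} : α → List α → Type
  | here {a : α} {l : List α} : Idx a (a :: l)
  | there {a b : α} {l : List α} : Idx a l → Idx a (b :: l)

variable (S : Signature)

/-- Individuals (first-order terms) of the logic, in a sorted context. -/
inductive Trm : List (FSort S.Base) → FSort S.Base → Type
  | var {ctx σ} : Idx σ ctx → Trm ctx σ
  | cst {ctx} (c : S.Cst) : Trm ctx (S.cstSort c)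
  | app {ctx σ τ} : Trm ctx (.arrow σ τ) → Trm ctx σ → Trm ctx τ

/-- Lists of terms matching a list of sorts (arguments of a predicate). -/
inductive TrmList (ctx : List (FSort S.Base)) : List (FSort S.Base) → Type
  | nil : TrmList ctx []
  | cons {σ l} : Trm S ctx σ → TrmList ctx l → TrmList ctx (σ :: l)

/-- Formulas of multisorted first-order logic. -/
inductive Fml : List (FSort S.Base) → Type
  | atom {ctx} (P : S.Pred) : TrmList S ctx (S.arity P) → Fml ctx
  | bot {ctx} : Fml ctx
  | imp {ctx} : Fml ctx → Fml ctx → Fml ctx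
  | conj {ctx} : Fml ctx → Fml ctx → Fml ctx
  | all {ctx} (σ : FSort S.Base) : Fml (σ :: ctx) → Fml ctx

variable {S}

/-- Context renamings. -/
def Ren (ctx ctx' : List (FSort S.Base)) : Type := ∀ σ, Idx σ ctx → Idx σ ctx'

def Ren.lift {ctx ctx' : List (FSort S.Base)} {σ : FSort S.Base} (r : Ren ctx ctx') :
    Ren (σ :: ctx) (σ :: ctx')
  | _, .here => .here
  | _, .there i => .there (r _ i)

def Trm.ren {ctx ctx' : List (FSort S.Base)} (r : Ren ctx ctx') :
    ∀ {σ}, Trm S ctx σ → Trm S ctx' σ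
  | _, .var i => .var (r _ i)
  | _, .cst c => .cst c
  | _, .app t u => .app (t.ren r) (u.ren r)

def TrmList.ren {ctx ctx' : List (FSort S.Base)} (r : Ren ctx ctx') :
    ∀ {l}, TrmList S ctx l → TrmList S ctx' l
  | _, .nil => .nil
  | _, .cons t ts => .cons (t.ren r) (ts.ren r)

def Fml.ren : ∀ {ctx ctx' : List (FSort S.Base)}, Ren ctx ctx' → Fml S ctx → Fml S ctx'
  | _, _, r, .atom P ts => .atom P (ts.ren r)
  | _, _, _, .bot => .bot
  | _, _, r, .imp A B => .imp (A.ren r) (B.ren r)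
  | _, _, r, .conj A B => .conj (A.ren r) (B.ren r)
  | _, _, r, .all σ A => .all σ (A.ren r.lift)

/-- Simultaneous substitutions. -/
def Subst (ctx ctx' : List (FSort S.Base)) : Type := ∀ σ, Idx σ ctx → Trm S ctx' σ

def Subst.lift {ctx ctx' : List (FSort S.Base)} {σ : FSort S.Base} (s : Subst ctx ctx') :
    Subst (σ :: ctx) (σ :: ctx')
  | _, .here => .var .here
  | _, .there i => (s _ i).ren (fun _ j => .there j)

def Trm.sub {ctx ctx' : List (FSort S.Base)} (s : Subst ctx ctx') :
    ∀ {σ}, Trm S ctx σ → Trm S ctx' σ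
  | _, .var i => s _ i
  | _, .cst c => .cst c
  | _, .app t u => .app (t.sub s) (u.sub s)

def TrmList.sub {ctx ctx' : List (FSort S.Base)} (s : Subst ctx ctx') :
    ∀ {l}, TrmList S ctx l → TrmList S ctx' l
  | _, .nil => .nil
  | _, .cons t ts => .cons (t.sub s) (ts.sub s)

def Fml.sub : ∀ {ctx ctx' : List (FSort S.Base)}, Subst ctx ctx' → Fml S ctx → Fml S ctx'
  | _, _, s, .atom P ts => .atom P (ts.sub s)
  | _, _, _, .bot => .bot
  | _, _, s, .imp A B => .imp (A.sub s) (B.sub s)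
  | _, _, s, .conj A B => .conj (A.sub s) (B.sub s)
  | _, _, s, .all σ A => .all σ (A.sub s.lift)

/-- Extend a substitution with a term for the head variable. -/
def Subst.cons {ctx ctx' : List (FSort S.Base)} {σ : FSort S.Base}
    (t : Trm S ctx' σ) (s : Subst ctx ctx') : Subst (σ :: ctx) ctx'
  | _, .here => t
  | _, .there i => s _ i

/-- The identity substitution. -/
def Subst.id {ctx : List (FSort S.Base)} : Subst ctx ctx := fun _ i => .var i

/-- Substitution of a single term for the head variable of the context. -/
def Fml.sub0 {ctx : List (FSort S.Base)} {σ : FSort S.Base}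
    (t : Trm S ctx σ) (A : Fml S (σ :: ctx)) : Fml S ctx :=
  A.sub (Subst.cons t Subst.id)

/-- Weakening renaming. -/
def Ren.wk {ctx : List (FSort S.Base)} {σ : FSort S.Base} : Ren ctx (σ :: ctx) :=
  fun _ i => .there i

/-- Weakening of a closed formula to an arbitrary context. -/
def Fml.wk0 {ctx : List (FSort S.Base)} (A : Fml S []) : Fml S ctx :=
  A.ren (fun _ i => by cases i)


/-! ## Polarities and relativization -/

/-- Negative formulas: negative atoms, `⊥`, `A ⇒ N`, `N ∧ N'`, `∀x N`. -/
inductive IsNeg : ∀ {ctx : List (FSort S.Base)}, Fml S ctx → Prop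
  | atom {ctx} {P : S.Pred} (h : S.isNeg P) (ts : TrmList S ctx (S.arity P)) :
      IsNeg (.atom P ts)
  | bot {ctx} : IsNeg (ctx := ctx) .bot
  | imp {ctx} {A B : Fml S ctx} : IsNeg B → IsNeg (.imp A B)
  | conj {ctx} {A B : Fml S ctx} : IsNeg A → IsNeg B → IsNeg (.conj A B)
  | all {ctx σ} {A : Fml S (σ :: ctx)} : IsNeg A → IsNeg (.all σ A)

/-- Positive formulas: positive atoms, `A ⇒ P`, `P ∧ B`, `A ∧ P`, `∀x P`. -/
inductive IsPos : ∀ {ctx : List (FSort S.Base)}, Fml S ctx → Prop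
  | atom {ctx} {P : S.Pred} (h : ¬ S.isNeg P) (ts : TrmList S ctx (S.arity P)) :
      IsPos (.atom P ts)
  | imp {ctx} {A B : Fml S ctx} : IsPos B → IsPos (.imp A B)
  | conjL {ctx} {A B : Fml S ctx} : IsPos A → IsPos (.conj A B)
  | conjR {ctx} {A B : Fml S ctx} : IsPos B → IsPos (.conj A B)
  | all {ctx σ} {A : Fml S (σ :: ctx)} : IsPos A → IsPos (.all σ A)

variable (S) in
/-- The relativized signature `Σ^r`: `Σ` extended with a positive unary relativization
predicate `Rel(·)` at each base sort. -/
def SigR : Signature where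
  Base := S.Base
  Cst := S.Cst
  cstSort := S.cstSort
  Pred := S.Pred ⊕ S.Base
  arity
    | .inl P => S.arity P
    | .inr b => [.base b]
  isNeg
    | .inl P => S.isNeg P
    | .inr _ => False

/-- Terms over `Σ` are terms over `Σ^r`. -/
def Trm.emb : ∀ {ctx : List (FSort S.Base)} {σ}, Trm S ctx σ → Trm (SigR S) ctx σ
  | _, _, .var i => .var i
  | _, _, .cst c => Trm.cst (S := SigR S) c
  | _, _, .app t u => .app t.emb u.emb

def TrmList.emb : ∀ {ctx : List (FSort S.Base)} {l}, TrmList S ctx l → TrmList (SigR S) ctx l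
  | _, _, .nil => .nil
  | _, _, .cons t ts => .cons t.emb ts.emb

/-- The relativization predicate, lifted from base sorts to all sorts by
`Rel(t : σ→τ) := ∀x^σ (Rel(x) ⇒ Rel(t x))`. -/
def RelF : ∀ {ctx : List (FSort S.Base)} (σ : FSort S.Base),
    Trm (SigR S) ctx σ → Fml (SigR S) ctx
  | _, .base b, t => Fml.atom (S := SigR S) (.inr b) (.cons t .nil)
  | _, .arrow σ τ, t =>
      .all σ (.imp (RelF σ (.var .here)) (RelF τ (.app (t.ren Ren.wk) (.var .here))))

/-- The relativized universal quantifier `∀^r x A := ∀x (Rel(x) ⇒ A)`. -/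
def allR {ctx : List (FSort S.Base)} (σ : FSort S.Base) (A : Fml (SigR S) (σ :: ctx)) :
    Fml (SigR S) ctx :=
  .all σ (.imp (RelF σ (.var .here)) A)

/-- The relativization `A^r` of a formula: every `∀x` is replaced by `∀^r x`, and
atoms, `⊥`, `⇒`, `∧` are left unchanged. -/
def Fml.relativize : ∀ {ctx : List (FSort S.Base)}, Fml S ctx → Fml (SigR S) ctx
  | _, .atom P ts => Fml.atom (S := SigR S) (.inl P) ts.emb
  | _, .bot => .bot
  | _, .imp A B => .imp A.relativize B.relativize
  | _, .conj A B => .conj A.relativize B.relativize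
  | _, .all σ A => allR σ A.relativize

/-- Derivability of sequents `Γ ⊢ A | Δ` in classical multi-conclusioned natural deduction
from a theory `T` of closed axioms, with all right-hand contexts `Δ` restricted to contain
only negative formulas. -/
inductive DerivN (T : Fml S [] → Prop) :
    ∀ (ctx : List (FSort S.Base)), List (Fml S ctx) → Fml S ctx → List (Fml S ctx) → Prop
  | id {ctx Γ A Δ} : (∀ B ∈ Δ, IsNeg B) → A ∈ Γ → DerivN T ctx Γ A Δ
  | ax {ctx Γ Δ} {A : Fml S []} : (∀ B ∈ Δ, IsNeg B) → T A → DerivN T ctx Γ A.wk0 Δ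
  | botI {ctx Γ A Δ} : A ∈ Δ → DerivN T ctx Γ A Δ → DerivN T ctx Γ .bot Δ
  | botE {ctx Γ A Δ} : DerivN T ctx Γ .bot (A :: Δ) → DerivN T ctx Γ A Δ
  | impI {ctx Γ A B Δ} : DerivN T ctx (A :: Γ) B Δ → DerivN T ctx Γ (.imp A B) Δ
  | impE {ctx Γ A B Δ} :
      DerivN T ctx Γ (.imp A B) Δ → DerivN T ctx Γ A Δ → DerivN T ctx Γ B Δ
  | conjI {ctx Γ A B Δ} :
      DerivN T ctx Γ A Δ → DerivN T ctx Γ B Δ → DerivN T ctx Γ (.conj A B) Δ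
  | conjE1 {ctx Γ A B Δ} : DerivN T ctx Γ (.conj A B) Δ → DerivN T ctx Γ A Δ
  | conjE2 {ctx Γ A B Δ} : DerivN T ctx Γ (.conj A B) Δ → DerivN T ctx Γ B Δ
  | allI {ctx Γ σ A Δ} :
      DerivN T (σ :: ctx) (Γ.map (Fml.ren Ren.wk)) A (Δ.map (Fml.ren Ren.wk)) →
      DerivN T ctx Γ (.all σ A) Δ
  | allE {ctx Γ σ A Δ} (t : Trm S ctx σ) :
      DerivN T ctx Γ (.all σ A) Δ → DerivN T ctx Γ (A.sub0 t) Δ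

/-- Relativized universal closure `∀^r x⃗ A`. -/
def allsRel {S : Signature} : ∀ (ctx : List (FSort S.Base)), Fml (SigR S) ctx → Fml (SigR S) []
  | [], A => A
  | σ :: ctx, A => allsRel ctx (allR σ A)

/-! ### Auxiliary lemmas for the soundness of relativization -/

section Auxiliary

variable {S : Signature}

theorem Trm.ren_eq {ctx ctx'} {r r' : Ren ctx ctx'} (h : ∀ τ i, r τ i = r' τ i)
    {σ} (t : Trm S ctx σ) : t.ren r = t.ren r' := by
  have : r = r' := funext fun τ => funext fun i => h τ i
  rw [this]


theorem Trm.sub_eq {ctx ctx'} {s s' : Subst ctx ctx'} (h : ∀ τ i, s τ i = s' τ i)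
    {σ} (t : Trm S ctx σ) : t.sub s = t.sub s' := by
  have : s = s' := funext fun τ => funext fun i => h τ i
  rw [this]

theorem Trm.ren_ren {ctx ctx' ctx''} (r : Ren ctx ctx') (r' : Ren ctx' ctx'')
    {σ} (t : Trm S ctx σ) :
    (t.ren r).ren r' = t.ren (fun τ i => r' τ (r τ i)) := by
  induction t with
  | var i => rfl
  | cst c => rfl
  | app t u iht ihu => simp [Trm.ren, iht, ihu]

theorem Trm.ren_sub {ctx ctx' ctx''} (r : Ren ctx ctx') (s : Subst ctx' ctx'')
    {σ} (t : Trm S ctx σ) :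
    (t.ren r).sub s = t.sub (fun τ i => s τ (r τ i)) := by
  induction t with
  | var i => rfl
  | cst c => rfl
  | app t u iht ihu => simp [Trm.ren, Trm.sub, iht, ihu]

theorem Trm.sub_ren {ctx ctx' ctx''} (s : Subst ctx ctx') (r : Ren ctx' ctx'')
    {σ} (t : Trm S ctx σ) :
    (t.sub s).ren r = t.sub (fun τ i => (s τ i).ren r) := by
  induction t with
  | var i => rfl
  | cst c => rfl
  | app t u iht ihu => simp [Trm.ren, Trm.sub, iht, ihu]

theorem Trm.sub_id {ctx} {σ} (t : Trm S ctx σ) : t.sub Subst.id = t := by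
  induction t with
  | var i => rfl
  | cst c => rfl
  | app t u iht ihu => simp [Trm.sub, iht, ihu]

theorem TrmList.ren_ren {ctx ctx' ctx''} (r : Ren ctx ctx') (r' : Ren ctx' ctx'')
    {l} (ts : TrmList S ctx l) :
    (ts.ren r).ren r' = ts.ren (fun τ i => r' τ (r τ i)) := by
  induction ts with
  | nil => rfl
  | cons t ts ih => simp [TrmList.ren, Trm.ren_ren, ih]

theorem TrmList.ren_sub {ctx ctx' ctx''} (r : Ren ctx ctx') (s : Subst ctx' ctx'')
    {l} (ts : TrmList S ctx l) :
    (ts.ren r).sub s = ts.sub (fun τ i => s τ (r τ i)) := by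
  induction ts with
  | nil => rfl
  | cons t ts ih => simp [TrmList.ren, TrmList.sub, Trm.ren_sub, ih]

theorem TrmList.sub_ren {ctx ctx' ctx''} (s : Subst ctx ctx') (r : Ren ctx' ctx'')
    {l} (ts : TrmList S ctx l) :
    (ts.sub s).ren r = ts.sub (fun τ i => (s τ i).ren r) := by
  induction ts with
  | nil => rfl
  | cons t ts ih => simp [TrmList.ren, TrmList.sub, Trm.sub_ren, ih]

theorem Ren.lift_comp {ctx ctx' ctx''} (r : Ren (S := S) ctx ctx') (r' : Ren ctx' ctx'')
    {σ : FSort S.Base} :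
    (Ren.lift (σ := σ) (fun τ i => r' τ (r τ i))) = fun τ i => r'.lift τ (r.lift τ i) := by
  funext τ i; cases i <;> rfl

theorem Subst.lift_ren_comp {ctx ctx' ctx''} (r : Ren ctx ctx') (s : Subst (S := S) ctx' ctx'')
    {σ : FSort S.Base} :
    (Subst.lift (σ := σ) (fun τ i => s τ (r τ i))) = fun τ i => s.lift τ (r.lift τ i) := by
  funext τ i; cases i <;> rfl

theorem Subst.lift_comp_ren {ctx ctx' ctx''} (s : Subst (S := S) ctx ctx') (r : Ren ctx' ctx'')
    {σ : FSort S.Base} :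
    (Subst.lift (σ := σ) (fun τ i => (s τ i).ren r)) = fun τ i => (s.lift τ i).ren r.lift := by
  funext τ i
  cases i with
  | here => rfl
  | there i =>
      show ((s _ i).ren r).ren (fun _ j => .there j) = ((s _ i).ren (fun _ j => .there j)).ren r.lift
      erw [Trm.ren_ren, Trm.ren_ren]
      exact Trm.ren_eq (fun τ j => rfl) _

theorem Ren.lift_sigR {ctx ctx'} (r : Ren (S := S) ctx ctx') {σ : FSort S.Base} :
    Ren.lift (S := SigR S) (σ := σ) r = Ren.lift (S := S) (σ := σ) r := by
  funext τ i; cases i <;> rfl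

theorem Fml.ren_ren : ∀ {ctx ctx' ctx''} (r : Ren ctx ctx') (r' : Ren ctx' ctx'')
    (A : Fml S ctx), (A.ren r).ren r' = A.ren (fun τ i => r' τ (r τ i))
  | _, _, _, r, r', .atom P ts => by simp [Fml.ren, TrmList.ren_ren]
  | _, _, _, r, r', .bot => rfl
  | _, _, _, r, r', .imp A B => by simp [Fml.ren, Fml.ren_ren]
  | _, _, _, r, r', .conj A B => by simp [Fml.ren, Fml.ren_ren]
  | _, _, _, r, r', .all σ A => by
      simp only [Fml.ren, Fml.ren_ren, Ren.lift_comp]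

theorem Fml.ren_sub : ∀ {ctx ctx' ctx''} (r : Ren ctx ctx') (s : Subst ctx' ctx'')
    (A : Fml S ctx), (A.ren r).sub s = A.sub (fun τ i => s τ (r τ i))
  | _, _, _, r, s, .atom P ts => by simp [Fml.ren, Fml.sub, TrmList.ren_sub]
  | _, _, _, r, s, .bot => rfl
  | _, _, _, r, s, .imp A B => by simp [Fml.ren, Fml.sub, Fml.ren_sub]
  | _, _, _, r, s, .conj A B => by simp [Fml.ren, Fml.sub, Fml.ren_sub]
  | _, _, _, r, s, .all σ A => by
      simp only [Fml.ren, Fml.sub, Fml.ren_sub, Subst.lift_ren_comp]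

theorem Fml.sub_ren : ∀ {ctx ctx' ctx''} (s : Subst ctx ctx') (r : Ren ctx' ctx'')
    (A : Fml S ctx), (A.sub s).ren r = A.sub (fun τ i => (s τ i).ren r)
  | _, _, _, s, r, .atom P ts => by simp [Fml.ren, Fml.sub, TrmList.sub_ren]
  | _, _, _, s, r, .bot => rfl
  | _, _, _, s, r, .imp A B => by simp [Fml.ren, Fml.sub, Fml.sub_ren]
  | _, _, _, s, r, .conj A B => by simp [Fml.ren, Fml.sub, Fml.sub_ren]
  | _, _, _, s, r, .all σ A => by
      simp only [Fml.ren, Fml.sub, Fml.sub_ren, Subst.lift_comp_ren]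

/-- The empty renaming. -/
def Ren.ofNil {ctx : List (FSort S.Base)} : Ren (S := S) [] ctx := fun _ i => nomatch i

theorem Fml.ren_from_nil {ctx} (r r' : Ren ([] : List (FSort S.Base)) ctx)
    (A : Fml S []) : A.ren r = A.ren r' := by
  have : r = r' := funext fun τ => funext fun i => nomatch i
  rw [this]

/-! ### Embedding lemmas -/

theorem Trm.emb_ren {ctx ctx'} (r : Ren ctx ctx') {σ} (t : Trm S ctx σ) :
    (t.ren r).emb = Trm.ren (S := SigR S) r t.emb := by
  induction t with
  | var i => simp [Trm.ren, Trm.emb]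
  | cst c => simp [Trm.ren, Trm.emb]; rfl
  | app t u iht ihu => simp [Trm.ren, Trm.emb, iht, ihu]; rfl

/-- Embedding of a substitution. -/
def Subst.embS {ctx ctx'} (s : Subst (S := S) ctx ctx') : Subst (S := SigR S) ctx ctx' :=
  fun τ i => (s τ i).emb

theorem Subst.embS_lift {ctx ctx'} (s : Subst (S := S) ctx ctx') {σ : FSort S.Base} :
    (Subst.lift (σ := σ) s).embS = Subst.lift (S := SigR S) (σ := σ) s.embS := by
  funext τ i
  cases i with
  | here => simp [Subst.embS, Subst.lift, Trm.emb]; rfl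
  | there i => exact Trm.emb_ren _ (s τ i)

theorem Trm.emb_sub {ctx ctx'} (s : Subst ctx ctx') {σ} (t : Trm S ctx σ) :
    (t.sub s).emb = Trm.sub (S := SigR S) s.embS t.emb := by
  induction t with
  | var i => simp [Trm.sub, Trm.emb, Subst.embS]
  | cst c => simp [Trm.sub, Trm.emb]; rfl
  | app t u iht ihu => simp [Trm.sub, Trm.emb, iht, ihu]; rfl

theorem TrmList.emb_ren {ctx ctx'} (r : Ren ctx ctx') {l} (ts : TrmList S ctx l) :
    (ts.ren r).emb = TrmList.ren (S := SigR S) r ts.emb := by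
  induction ts with
  | nil => rfl
  | cons t ts ih => simp [TrmList.ren, TrmList.emb, Trm.emb_ren, ih]; rfl

theorem TrmList.emb_sub {ctx ctx'} (s : Subst ctx ctx') {l} (ts : TrmList S ctx l) :
    (ts.sub s).emb = TrmList.sub (S := SigR S) s.embS ts.emb := by
  induction ts with
  | nil => rfl
  | cons t ts ih => simp [TrmList.sub, TrmList.emb, Trm.emb_sub, ih]; rfl

/-! ### RelF commutes with renaming and substitution -/

theorem RelF_ren : ∀ (σ : FSort S.Base) {ctx ctx'} (r : Ren ctx ctx')
    (t : Trm (SigR S) ctx σ), (RelF σ t).ren r = RelF σ (t.ren r)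
  | .base b, _, _, r, t => rfl
  | .arrow σ τ, _, _, r, t => by
      have ht : Trm.ren (S := SigR S) (Ren.lift (S := SigR S) (σ := σ) r)
            (Trm.ren (S := SigR S) Ren.wk t)
          = Trm.ren (S := SigR S) Ren.wk (Trm.ren (S := SigR S) r t) := by
        erw [Trm.ren_ren, Trm.ren_ren]; exact Trm.ren_eq (fun τ j => rfl) t
      simp only [RelF, Fml.ren, Trm.ren, RelF_ren σ, RelF_ren τ, Ren.lift]; erw [ht]; rfl

theorem RelF_sub : ∀ (σ : FSort S.Base) {ctx ctx'} (s : Subst ctx ctx')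
    (t : Trm (SigR S) ctx σ), (RelF σ t).sub s = RelF σ (t.sub s)
  | .base b, _, _, s, t => rfl
  | .arrow σ τ, _, _, s, t => by
      have ht : Trm.sub (S := SigR S) (Subst.lift (S := SigR S) (σ := σ) s)
            (Trm.ren (S := SigR S) Ren.wk t)
          = Trm.ren (S := SigR S) Ren.wk (Trm.sub (S := SigR S) s t) := by
        erw [Trm.ren_sub, Trm.sub_ren]
        exact Trm.sub_eq (fun τ j => rfl) t
      simp only [RelF, Fml.sub, Trm.sub, RelF_sub σ, RelF_sub τ, Subst.lift]; erw [ht]; rfl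

/-! ### Relativization commutes with renaming and substitution -/

theorem Fml.relativize_ren : ∀ {ctx ctx'} (r : Ren ctx ctx') (A : Fml S ctx),
    (A.ren r).relativize = Fml.ren (S := SigR S) r A.relativize
  | _, _, r, .atom P ts => by
      simp [Fml.ren, Fml.relativize, TrmList.emb_ren]; rfl
  | _, _, r, .bot => rfl
  | _, _, r, .imp A B => by simp [Fml.ren, Fml.relativize, Fml.relativize_ren]
  | _, _, r, .conj A B => by simp [Fml.ren, Fml.relativize, Fml.relativize_ren]
  | _, _, r, .all σ A => by
      simp only [Fml.ren, Fml.relativize, allR]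
      rw [Fml.relativize_ren, RelF_ren, Ren.lift_sigR]
      rfl

theorem Fml.relativize_sub : ∀ {ctx ctx'} (s : Subst ctx ctx') (A : Fml S ctx),
    (A.sub s).relativize = Fml.sub (S := SigR S) s.embS A.relativize
  | _, _, s, .atom P ts => by
      simp [Fml.sub, Fml.relativize, TrmList.emb_sub]; rfl
  | _, _, s, .bot => rfl
  | _, _, s, .imp A B => by simp [Fml.sub, Fml.relativize, Fml.relativize_sub]
  | _, _, s, .conj A B => by simp [Fml.sub, Fml.relativize, Fml.relativize_sub]
  | _, _, s, .all σ A => by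
      simp only [Fml.sub, Fml.relativize, allR]
      rw [Fml.relativize_sub, RelF_sub, Subst.embS_lift]
      rfl

theorem Fml.relativize_sub0 {ctx} {σ : FSort S.Base} (t : Trm S ctx σ)
    (A : Fml S (σ :: ctx)) :
    (A.sub0 t).relativize = Fml.sub0 (S := SigR S) t.emb A.relativize := by
  show (A.sub _).relativize = Fml.sub (S := SigR S) _ A.relativize
  rw [Fml.relativize_sub]
  congr 1
  funext τ i
  cases i with
  | here => rfl
  | there i => exact Trm.emb.eq_1 _ _ _

/-! ### Negativity lemmas -/

theorem IsNeg.ren_iff : ∀ {ctx ctx'} (r : Ren ctx ctx') (A : Fml S ctx),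
    IsNeg (A.ren r) ↔ IsNeg A
  | _, _, r, .atom P ts => by
      constructor <;> intro h <;> cases h <;> exact .atom ‹_› _
  | _, _, r, .bot => by constructor <;> intro _ <;> exact .bot
  | _, _, r, .imp A B => by
      constructor <;> intro h <;> cases h
      · exact .imp ((IsNeg.ren_iff r B).mp ‹_›)
      · exact .imp ((IsNeg.ren_iff r B).mpr ‹_›)
  | _, _, r, .conj A B => by
      constructor <;> intro h <;> cases h
      · exact .conj ((IsNeg.ren_iff r A).mp ‹_›) ((IsNeg.ren_iff r B).mp ‹_›)
      · exact .conj ((IsNeg.ren_iff r A).mpr ‹_›) ((IsNeg.ren_iff r B).mpr ‹_›)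
  | _, _, r, .all σ A => by
      constructor <;> intro h <;> cases h
      · exact .all ((IsNeg.ren_iff r.lift A).mp ‹_›)
      · exact .all ((IsNeg.ren_iff r.lift A).mpr ‹_›)

theorem IsNeg.relativize {ctx} {A : Fml S ctx} (h : IsNeg A) : IsNeg A.relativize := by
  induction h with
  | atom h ts =>
      exact IsNeg.atom (S := SigR S) (show (SigR S).isNeg (Sum.inl _) from h) _
  | bot => exact .bot
  | imp _ ih => exact .imp ih
  | conj _ _ ih1 ih2 => exact .conj ih1 ih2
  | all _ ih => exact .all (.imp ih)

/-- In the restricted system, the right-hand context of any derivable sequent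
consists of negative formulas. -/
theorem DerivN.neg {T : Fml S [] → Prop} {ctx Γ A Δ} (h : DerivN T ctx Γ A Δ) :
    ∀ B ∈ Δ, IsNeg B := by
  induction h with
  | id hn _ => exact hn
  | ax hn _ => exact hn
  | botI _ _ ih => exact ih
  | botE _ ih => exact fun B hB => ih B (List.mem_cons_of_mem _ hB)
  | impI _ ih => exact ih
  | impE _ _ ih _ => exact ih
  | conjI _ _ ih _ => exact ih
  | conjE1 _ ih => exact ih
  | conjE2 _ ih => exact ih
  | allI _ ih =>
      exact fun B hB => (IsNeg.ren_iff _ B).mp (ih _ (List.mem_map_of_mem hB))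
  | allE t _ ih => exact ih

/-! ### Weakening -/

theorem DerivN.weaken {T : Fml S [] → Prop} {ctx Γ A Δ}
    (h : DerivN T ctx Γ A Δ) :
    ∀ {ctx'} (r : Ren ctx ctx') (Γ' Δ' : List (Fml S ctx')),
    (∀ B ∈ Γ, B.ren r ∈ Γ') → (∀ B ∈ Δ, B.ren r ∈ Δ') →
    ((∀ B ∈ Δ, IsNeg B) → ∀ B ∈ Δ', IsNeg B) →
    DerivN T ctx' Γ' (A.ren r) Δ' := by
  induction h with
  | id hn hA =>
      intro ctx' r Γ' Δ' hΓ hΔ hN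
      exact .id (hN hn) (hΓ _ hA)
  | @ax _ _ _ A hn tA =>
      intro ctx' r Γ' Δ' hΓ hΔ hN
      have h1 := DerivN.ax (T := T) (Γ := Γ') (Δ := Δ') (A := A) (hN hn) tA
      have e : Fml.ren r (Fml.wk0 A) = Fml.wk0 A := by
        show (A.ren _).ren r = A.ren _
        erw [Fml.ren_ren]; exact Fml.ren_from_nil _ _ A
      rw [e]; exact h1
  | botI hA _ ih =>
      intro ctx' r Γ' Δ' hΓ hΔ hN
      exact .botI (hΔ _ hA) (ih r Γ' Δ' hΓ hΔ hN)
  | @botE _ _ A _ _ ih =>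
      intro ctx' r Γ' Δ' hΓ hΔ hN
      refine .botE (ih r Γ' (A.ren r :: Δ') hΓ ?_ ?_)
      · intro B hB
        rcases List.mem_cons.mp hB with h | h
        · subst h; exact List.mem_cons_self
        · exact List.mem_cons_of_mem _ (hΔ _ h)
      · intro hall B hB
        rcases List.mem_cons.mp hB with h | h
        · subst h
          exact (IsNeg.ren_iff r A).mpr (hall A (List.mem_cons_self))
        · exact hN (fun C hC => hall C (List.mem_cons_of_mem _ hC)) B h
  | @impI _ _ A B _ _ ih =>
      intro ctx' r Γ' Δ' hΓ hΔ hN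
      refine .impI (ih r (A.ren r :: Γ') Δ' ?_ hΔ hN)
      intro C hC
      rcases List.mem_cons.mp hC with h | h
      · subst h; exact List.mem_cons_self
      · exact List.mem_cons_of_mem _ (hΓ _ h)
  | impE _ _ ih1 ih2 =>
      intro ctx' r Γ' Δ' hΓ hΔ hN
      exact .impE (ih1 r Γ' Δ' hΓ hΔ hN) (ih2 r Γ' Δ' hΓ hΔ hN)
  | conjI _ _ ih1 ih2 =>
      intro ctx' r Γ' Δ' hΓ hΔ hN
      exact .conjI (ih1 r Γ' Δ' hΓ hΔ hN) (ih2 r Γ' Δ' hΓ hΔ hN)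
  | conjE1 _ ih =>
      intro ctx' r Γ' Δ' hΓ hΔ hN
      exact .conjE1 (ih r Γ' Δ' hΓ hΔ hN)
  | conjE2 _ ih =>
      intro ctx' r Γ' Δ' hΓ hΔ hN
      exact .conjE2 (ih r Γ' Δ' hΓ hΔ hN)
  | @allI _ Γ σ A Δ _ ih =>
      intro ctx' r Γ' Δ' hΓ hΔ hN
      refine .allI (ih r.lift (Γ'.map (Fml.ren Ren.wk)) (Δ'.map (Fml.ren Ren.wk)) ?_ ?_ ?_)
      · intro B hB
        rcases List.mem_map.mp hB with ⟨C, hC, rfl⟩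
        rw [show (C.ren Ren.wk).ren r.lift = (C.ren r).ren Ren.wk by
          rw [Fml.ren_ren, Fml.ren_ren]
          exact congrArg (fun r => Fml.ren r C) (funext fun τ => funext fun j => rfl)]
        exact List.mem_map_of_mem (hΓ _ hC)
      · intro B hB
        rcases List.mem_map.mp hB with ⟨C, hC, rfl⟩
        rw [show (C.ren Ren.wk).ren r.lift = (C.ren r).ren Ren.wk by
          rw [Fml.ren_ren, Fml.ren_ren]
          exact congrArg (fun r => Fml.ren r C) (funext fun τ => funext fun j => rfl)]
        exact List.mem_map_of_mem (hΔ _ hC)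
      · intro hall B hB
        rcases List.mem_map.mp hB with ⟨C, hC, rfl⟩
        refine (IsNeg.ren_iff Ren.wk C).mpr ?_
        refine hN (fun D hD => (IsNeg.ren_iff Ren.wk D).mp
          (hall _ (List.mem_map_of_mem hD))) C hC
  | @allE _ _ σ A _ t _ ih =>
      intro ctx' r Γ' Δ' hΓ hΔ hN
      have h1 := DerivN.allE (t.ren r) (ih r Γ' Δ' hΓ hΔ hN)
      rwa [show (A.ren r.lift).sub0 (t.ren r) = (A.sub0 t).ren r by
        show (A.ren r.lift).sub _ = (A.sub _).ren r
        rw [Fml.ren_sub, Fml.sub_ren]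
        refine congrArg (fun s => Fml.sub s A) (funext fun τ => funext fun j => ?_)
        cases j <;> rfl] at h1

/-! ### Relativization of terms is provable -/

theorem relTerm {Tr : Fml (SigR S) [] → Prop}
    (hc : ∀ c : S.Cst, DerivN Tr [] [] (RelF (S.cstSort c) (Trm.cst (S := SigR S) c)) [])
    {ctx} (Γ' Δ' : List (Fml (SigR S) ctx))
    (hrel : ∀ (σ) (i : Idx σ ctx), RelF (S := S) σ (.var i) ∈ Γ')
    (hneg : ∀ B ∈ Δ', IsNeg B) :
    ∀ {σ} (t : Trm S ctx σ), DerivN Tr ctx Γ' (RelF σ t.emb) Δ' := by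
  intro σ t
  induction t with
  | var i =>
      erw [Trm.emb.eq_1]
      exact .id hneg (hrel _ i)
  | cst c =>
      erw [Trm.emb.eq_2]
      have h1 := (hc c).weaken Ren.ofNil Γ' Δ'
        (fun B hB => nomatch hB) (fun B hB => nomatch hB) (fun _ => hneg)
      erw [RelF_ren] at h1; exact h1
  | @app σ τ t u iht ihu =>
      erw [Trm.emb.eq_3]
      have h1 := DerivN.allE (A := .imp (RelF σ (.var .here))
        (RelF τ (.app (t.emb.ren Ren.wk) (.var .here)))) u.emb iht
      have e1 : (RelF σ (Trm.var (S := SigR S) .here)).sub0 u.emb = RelF σ u.emb := by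
        show (RelF σ _).sub _ = _
        rw [RelF_sub]; rfl
      have e2 : (RelF τ (.app (t.emb.ren Ren.wk) (Trm.var (S := SigR S) .here))).sub0 u.emb
          = RelF τ (.app t.emb u.emb) := by
        show (RelF τ _).sub _ = _
        rw [RelF_sub]
        show RelF τ (.app ((t.emb.ren Ren.wk).sub _) _) = _
        rw [show (t.emb.ren Ren.wk).sub (Subst.cons u.emb Subst.id) = t.emb by
          erw [Trm.ren_sub]
          exact (Trm.sub_eq (fun τ j => rfl) t.emb).trans (Trm.sub_id t.emb)]
        rfl
      have h2 : DerivN Tr ctx Γ' (.imp (RelF σ u.emb) (RelF τ (.app t.emb u.emb))) Δ' := by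
        have : (Fml.imp (RelF σ (Trm.var (S := SigR S) .here))
            (RelF τ (.app (t.emb.ren Ren.wk) (.var .here)))).sub0 u.emb
            = .imp (RelF σ u.emb) (RelF τ (.app t.emb u.emb)) := by
          show Fml.imp _ _ = _
          rw [← e1, ← e2]; rfl
        rwa [this] at h1
      exact h2.impE ihu

/-! ### Main induction -/

theorem DerivN.relativizeSound {T : Fml S [] → Prop} {Tr : Fml (SigR S) [] → Prop}
    (hc : ∀ c : S.Cst, DerivN Tr [] [] (RelF (S.cstSort c) (Trm.cst (S := SigR S) c)) [])
    (hax : ∀ A : Fml S [], T A → DerivN Tr [] [] A.relativize [])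
    {ctx Γ A Δ} (h : DerivN T ctx Γ A Δ) :
    ∀ (Γ' : List (Fml (SigR S) ctx)),
    (∀ (σ) (i : Idx σ ctx), RelF (S := S) σ (.var i) ∈ Γ') →
    (∀ B ∈ Γ, B.relativize ∈ Γ') →
    DerivN Tr ctx Γ' A.relativize (Δ.map Fml.relativize) := by
  induction h with
  | id hn hA =>
      intro Γ' hrel hΓ
      refine .id ?_ (hΓ _ hA)
      intro B hB
      rcases List.mem_map.mp hB with ⟨C, hC, rfl⟩
      exact (hn C hC).relativize
  | @ax _ _ _ A hn tA =>
      intro Γ' hrel hΓ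
      have h1 := (hax A tA).weaken Ren.ofNil Γ' _
        (fun B hB => nomatch hB) (fun B hB => nomatch hB)
        (fun _ B hB => by
          rcases List.mem_map.mp hB with ⟨C, hC, rfl⟩
          exact (hn C hC).relativize)
      rwa [show (Fml.wk0 A).relativize = Fml.ren (S := SigR S) Ren.ofNil A.relativize by
        show (A.ren _).relativize = _
        erw [Fml.relativize_ren]
        exact Fml.ren_from_nil _ _ _]
  | botI hA _ ih =>
      intro Γ' hrel hΓ
      exact .botI (List.mem_map_of_mem hA) (ih Γ' hrel hΓ)
  | botE _ ih =>
      intro Γ' hrel hΓ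
      exact .botE (ih Γ' hrel hΓ)
  | @impI _ _ A B _ _ ih =>
      intro Γ' hrel hΓ
      refine .impI (ih (A.relativize :: Γ') (fun σ i => List.mem_cons_of_mem _ (hrel σ i)) ?_)
      intro C hC
      rcases List.mem_cons.mp hC with h | h
      · subst h; exact List.mem_cons_self
      · exact List.mem_cons_of_mem _ (hΓ _ h)
  | impE _ _ ih1 ih2 =>
      intro Γ' hrel hΓ
      exact .impE (ih1 Γ' hrel hΓ) (ih2 Γ' hrel hΓ)
  | conjI _ _ ih1 ih2 =>
      intro Γ' hrel hΓ
      exact .conjI (ih1 Γ' hrel hΓ) (ih2 Γ' hrel hΓ)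
  | conjE1 _ ih =>
      intro Γ' hrel hΓ
      exact .conjE1 (ih Γ' hrel hΓ)
  | conjE2 _ ih =>
      intro Γ' hrel hΓ
      exact .conjE2 (ih Γ' hrel hΓ)
  | @allI _ Γ σ A Δ _ ih =>
      intro Γ' hrel hΓ
      have key := ih (RelF σ (.var .here) :: Γ'.map (Fml.ren Ren.wk)) ?_ ?_
      · refine DerivN.allI (Γ := Γ') (A := .imp (RelF σ (.var .here)) A.relativize)
          (.impI ?_)
        rwa [show (Δ.map (Fml.ren Ren.wk)).map Fml.relativize
            = (Δ.map Fml.relativize).map (Fml.ren Ren.wk) by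
          rw [List.map_map, List.map_map]
          exact List.map_congr_left (fun C _ => Fml.relativize_ren Ren.wk C)] at key
      · intro τ i
        cases i with
        | here => exact List.mem_cons_self
        | there i =>
            refine List.mem_cons_of_mem _ ?_
            have e : RelF (S := S) τ (Trm.var (S := SigR S) (.there i))
                = Fml.ren (S := SigR S) (Ren.wk (S := SigR S) (σ := σ)) (RelF (S := S) τ (.var i)) := by
              erw [RelF_ren]; rfl
            erw [e]
            exact List.mem_map_of_mem (hrel τ i)
      · intro B hB
        rcases List.mem_map.mp hB with ⟨C, hC, rfl⟩
        refine List.mem_cons_of_mem _ ?_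
        rw [Fml.relativize_ren]
        exact List.mem_map_of_mem (hΓ _ hC)
  | @allE ctx2 Γ2 σ A Δ2 t hd ih =>
      intro Γ' hrel hΓ
      have hneg : ∀ B ∈ Δ2.map Fml.relativize, IsNeg B := by
        intro B hB
        rcases List.mem_map.mp hB with ⟨C, hC, rfl⟩
        exact (hd.neg C hC).relativize
      have h1 := ih Γ' hrel hΓ
      have h2 := DerivN.allE (A := .imp (RelF σ (.var .here)) A.relativize) t.emb h1
      have e1 : (Fml.imp (RelF σ (Trm.var (S := SigR S) .here)) A.relativize).sub0 t.emb
          = .imp (RelF σ t.emb) (A.relativize.sub0 t.emb) := by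
        show Fml.imp ((RelF σ _).sub _) _ = _
        erw [RelF_sub]; rfl
      rw [e1] at h2
      have h3 := relTerm hc Γ' _ hrel hneg t
      have h4 := h2.impE h3
      rwa [Fml.relativize_sub0]

end Auxiliary

/-- Soundness of relativization.  Let `T` be a theory over `Σ` and `T^r` a theory over `Σ^r`
such that (i) `T^r ⊢ Rel(c)` for every individual constant `c` of `Σ`; (ii) `T^r ⊢ A^r`
for every axiom `A ∈ T`; (iii) every sort of `Σ` has a closed individual.  Then for every
closed formula `A` over `Σ` (derivability being taken in the system where all right-hand
contexts consist of negative formulas), `T ⊢ A` implies `T^r ⊢ A^r`. -/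
theorem relativization_sound {S : Signature}
    (T : Fml S [] → Prop) (Tr : Fml (SigR S) [] → Prop)
    (hc : ∀ c : S.Cst, DerivN Tr [] [] (RelF (S.cstSort c) (Trm.cst (S := SigR S) c)) [])
    (hax : ∀ A : Fml S [], T A → DerivN Tr [] [] A.relativize [])
    (hinhab : ∀ σ : FSort S.Base, Nonempty (Trm S [] σ))
    (A : Fml S []) (h : DerivN T [] [] A []) :
    DerivN Tr [] [] A.relativize [] := by
  exact h.relativizeSound hc hax [] (fun σ i => nomatch i) (fun B hB => nomatch hB)
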